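/- arXiv:1112.0452 — 4 statements merged into one kernel-verified Lean document; each statement's English description precedes it below -/
import Mathlib

section
/- If γ : [a,b] → V is a continuous path of bounded variation, then for any sequence of partitions 𝒫ₖ of [a,b] with mesh tending to 0, the partition sums ∑ᵢ ‖γ(u_{i+1}) − γ(u_i)‖ converge to the total variation |γ|. -/
/-!
Every partition sum is bounded by the variation, so only the lower bound needs an argument.
Fix a partition `t` whose sum is close to the variation. For a fine partition `u`, snap each
point `t j` to the last `u i` lying below it; by uniform continuity this moves each `γ (t j)`
by at most some small `η`, so the sum along `t` exceeds the sum along the snapped points by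
at most `2 m η`. The snapped points form a coarsening of `u`, whose sum is at most the sum
along `u` by the triangle inequality.
-/

open Filter Finset

section PartitionSums

variable {α : Type*} [PseudoMetricSpace α]

theorem sum_dist_le_sum_dist_add {f g : ℕ → α} {η : ℝ} (hfg : ∀ j, dist (f j) (g j) ≤ η)
    (m : ℕ) :
    ∑ j ∈ range m, dist (f (j + 1)) (f j) ≤ ∑ j ∈ range m, dist (g (j + 1)) (g j) + 2 * m * η :=
  calc ∑ j ∈ range m, dist (f (j + 1)) (f j)
      ≤ ∑ j ∈ range m, (dist (g (j + 1)) (g j) + 2 * η) := sum_le_sum fun j _ => by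
        linarith [dist_triangle4 (f (j + 1)) (g (j + 1)) (g j) (f j), hfg j, hfg (j + 1),
          dist_comm (f j) (g j)]
    _ = ∑ j ∈ range m, dist (g (j + 1)) (g j) + 2 * m * η := by
        rw [sum_add_distrib, sum_const, card_range, nsmul_eq_mul]; ring

theorem sum_dist_comp_le_sum_dist (f : ℕ → α) {ι : ℕ → ℕ} (hι : Monotone ι) {m N : ℕ}
    (hN : ι m ≤ N) :
    ∑ j ∈ range m, dist (f (ι (j + 1))) (f (ι j)) ≤ ∑ i ∈ range N, dist (f (i + 1)) (f i) := by
  have coarsen : ∀ m, ∑ j ∈ range m, dist (f (ι (j + 1))) (f (ι j))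
      ≤ ∑ i ∈ range (ι m), dist (f (i + 1)) (f i) := by
    intro m
    induction m with
    | zero => simpa using sum_nonneg fun i _ => dist_nonneg
    | succ m ih =>
      rw [sum_range_succ, ← sum_range_add_sum_Ico _ (hι m.le_succ)]
      gcongr
      simpa only [dist_comm] using dist_le_Ico_sum_dist f (hι m.le_succ)
  exact (coarsen m).trans
    (sum_le_sum_of_subset_of_nonneg (range_subset_range.2 hN) fun _ _ _ => dist_nonneg)

end PartitionSums

theorem sum_dist_le_toReal_eVariationOn {α E : Type*} [LinearOrder α] [PseudoMetricSpace E]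
    {f : α → E} {s : Set α} (hf : eVariationOn f s ≠ ⊤) {n : ℕ} {u : ℕ → α}
    (hu : MonotoneOn u (Set.Iic n)) (us : ∀ i ≤ n, u i ∈ s) :
    ∑ i ∈ range n, dist (f (u (i + 1))) (f (u i)) ≤ (eVariationOn f s).toReal := by
  simpa only [ENNReal.toReal_sum fun _ _ => edist_ne_top _ _, ← dist_edist] using
    ENNReal.toReal_mono hf (eVariationOn.sum_le_of_monotoneOn_Iic hu us)

theorem exists_lt_sum_dist_of_lt_toReal_eVariationOn {α E : Type*} [LinearOrder α]
    [PseudoMetricSpace E] {f : α → E} {s : Set α} (hs : s.Nonempty) (hf : eVariationOn f s ≠ ⊤)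
    {c : ℝ} (hc : c < (eVariationOn f s).toReal) :
    ∃ (m : ℕ) (t : ℕ → α), Monotone t ∧ (∀ j, t j ∈ s) ∧
      c < ∑ j ∈ range m, dist (f (t (j + 1))) (f (t j)) := by
  rcases lt_or_ge c 0 with hc0 | hc0
  · obtain ⟨x, hx⟩ := hs
    exact ⟨0, fun _ => x, monotone_const, fun _ => hx, by simpa using hc0⟩
  have hlt := (ENNReal.ofReal_lt_iff_lt_toReal hc0 hf).2 hc
  rw [eVariationOn, lt_iSup_iff] at hlt
  obtain ⟨⟨m, t, ht, hts⟩, hsum⟩ := hlt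
  refine ⟨m, t, ht, hts, ?_⟩
  rw [ENNReal.ofReal_lt_iff_lt_toReal hc0 (ENNReal.sum_ne_top.2 fun _ _ => edist_ne_top _ _),
    ENNReal.toReal_sum fun _ _ => edist_ne_top _ _] at hsum
  simpa only [← dist_edist] using hsum

section Snap

variable (u : ℕ → ℝ) (n : ℕ)

noncomputable def lastIndexLE (x : ℝ) : ℕ :=
  Nat.findGreatest (fun i => u i ≤ x) n

theorem lastIndexLE_le (x : ℝ) : lastIndexLE u n x ≤ n :=
  Nat.findGreatest_le n

theorem monotone_lastIndexLE : Monotone (lastIndexLE u n) := fun _ _ hxy =>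
  Nat.findGreatest_mono (fun _ hi => hi.trans hxy) le_rfl

variable {u n}

theorem dist_lastIndexLE_lt {x δ : ℝ} (hδ : 0 < δ) (h0 : u 0 ≤ x) (hn : x ≤ u n)
    (hmesh : ∀ i < n, u (i + 1) - u i < δ) : dist x (u (lastIndexLE u n x)) < δ := by
  have hle : u (lastIndexLE u n x) ≤ x :=
    Nat.findGreatest_spec (P := fun i => u i ≤ x) (Nat.zero_le n) h0
  rw [Real.dist_eq, abs_of_nonneg (sub_nonneg.2 hle)]
  rcases (lastIndexLE_le u n x).lt_or_eq with hlt | heq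
  · have hnext : x < u (lastIndexLE u n x + 1) :=
      not_le.1 (Nat.findGreatest_is_greatest (Nat.lt_succ_self _) hlt)
    linarith [hmesh _ hlt]
  · rw [heq]
    linarith

end Snap

theorem sum_dist_le_sum_dist_add_of_mesh_lt {E : Type*} [PseudoMetricSpace E] {γ : ℝ → E}
    {a b δ η : ℝ} (hδ : 0 < δ)
    (hγ : ∀ x ∈ Set.Icc a b, ∀ y ∈ Set.Icc a b, dist x y < δ → dist (γ x) (γ y) < η)
    {n : ℕ} {u : ℕ → ℝ} (h0 : u 0 = a) (hlast : u n = b) (hu : ∀ i ≤ n, u i ∈ Set.Icc a b)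
    (hmesh : ∀ i < n, u (i + 1) - u i < δ) {m : ℕ} {t : ℕ → ℝ} (ht : Monotone t)
    (hts : ∀ j, t j ∈ Set.Icc a b) :
    ∑ j ∈ range m, dist (γ (t (j + 1))) (γ (t j))
      ≤ ∑ i ∈ range n, dist (γ (u (i + 1))) (γ (u i)) + 2 * m * η := by
  set ι := fun j => lastIndexLE u n (t j)
  have hsnap : ∀ j, dist (γ (t j)) (γ (u (ι j))) ≤ η := fun j =>
    (hγ _ (hts j) _ (hu _ (lastIndexLE_le u n _))
      (dist_lastIndexLE_lt hδ (h0 ▸ (hts j).1) (hlast ▸ (hts j).2) hmesh)).le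
  calc ∑ j ∈ range m, dist (γ (t (j + 1))) (γ (t j))
      ≤ ∑ j ∈ range m, dist (γ (u (ι (j + 1)))) (γ (u (ι j))) + 2 * m * η :=
        sum_dist_le_sum_dist_add hsnap m
    _ ≤ ∑ i ∈ range n, dist (γ (u (i + 1))) (γ (u i)) + 2 * m * η := by
        gcongr
        exact sum_dist_comp_le_sum_dist (fun i => γ (u i))
          ((monotone_lastIndexLE u n).comp ht) (lastIndexLE_le u n _)

theorem eventually_sum_dist_lt_sum_dist_add {E : Type*} [PseudoMetricSpace E] {γ : ℝ → E}
    {a b : ℝ} (hγ : UniformContinuousOn γ (Set.Icc a b)) {n : ℕ → ℕ} {u : ℕ → ℕ → ℝ}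
    (h0 : ∀ k, u k 0 = a) (hlast : ∀ k, u k (n k) = b)
    (hu : ∀ k, ∀ i ≤ n k, u k i ∈ Set.Icc a b)
    (hmesh : ∀ ε > 0, ∃ K, ∀ k ≥ K, ∀ i < n k, u k (i + 1) - u k i < ε)
    {m : ℕ} {t : ℕ → ℝ} (ht : Monotone t) (hts : ∀ j, t j ∈ Set.Icc a b) {ε : ℝ} (hε : 0 < ε) :
    ∀ᶠ k in atTop, ∑ j ∈ range m, dist (γ (t (j + 1))) (γ (t j))
      < ∑ i ∈ range (n k), dist (γ (u k (i + 1))) (γ (u k i)) + ε := by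
  set η := ε / (2 * m + 1)
  have hη : 0 < η := by positivity
  have h2mη : 2 * m * η < ε := by
    rw [mul_div_assoc', div_lt_iff₀ (by positivity)]
    nlinarith
  obtain ⟨δ, hδ, hγδ⟩ := Metric.uniformContinuousOn_iff.1 hγ η hη
  obtain ⟨K, hK⟩ := hmesh δ hδ
  filter_upwards [eventually_ge_atTop K] with k hk
  have := sum_dist_le_sum_dist_add_of_mesh_lt (m := m) hδ hγδ (h0 k) (hlast k) (hu k)
    (hK k hk) ht hts
  linarith

theorem partition_sums_tendsto_variation_general {V : Type*} [NormedAddCommGroup V]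
    (γ : ℝ → V) (a b : ℝ) (hab : a ≤ b)
    (hcont : ContinuousOn γ (Set.Icc a b))
    (hbv : eVariationOn γ (Set.Icc a b) ≠ ⊤)
    (n : ℕ → ℕ) (u : ℕ → ℕ → ℝ)
    (h0 : ∀ k, u k 0 = a) (hlast : ∀ k, u k (n k) = b)
    (hmono : ∀ k, ∀ i < n k, u k i < u k (i + 1))
    (hmesh : ∀ ε > 0, ∃ K, ∀ k ≥ K, ∀ i < n k, u k (i + 1) - u k i < ε) :
    Filter.Tendsto (fun k => ∑ i ∈ Finset.range (n k), ‖γ (u k (i + 1)) - γ (u k i)‖)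
      Filter.atTop (nhds (eVariationOn γ (Set.Icc a b)).toReal) := by
  simp only [← dist_eq_norm]
  have hmonoOn : ∀ k, MonotoneOn (u k) (Set.Iic (n k)) := fun k =>
    (strictMonoOn_Iic_of_lt_succ fun i hi => by simpa using hmono k i hi).monotoneOn
  have hu : ∀ k, ∀ i ≤ n k, u k i ∈ Set.Icc a b := fun k i hi =>
    ⟨h0 k ▸ hmonoOn k (Nat.zero_le _) hi (Nat.zero_le i),
      hlast k ▸ hmonoOn k hi (Set.mem_Iic.2 le_rfl) hi⟩
  refine tendsto_order.2 ⟨fun c hc => ?_, fun c hc => Eventually.of_forall fun k =>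
    (sum_dist_le_toReal_eVariationOn hbv (hmonoOn k) (hu k)).trans_lt hc⟩
  obtain ⟨m, t, ht, hts, hct⟩ :=
    exists_lt_sum_dist_of_lt_toReal_eVariationOn (Set.nonempty_Icc.2 hab) hbv hc
  filter_upwards [eventually_sum_dist_lt_sum_dist_add
    (isCompact_Icc.uniformContinuousOn_of_continuous hcont) h0 hlast hu hmesh ht hts
    (sub_pos.2 hct)] with k hk
  linarith

/-- For a continuous path of bounded variation, partition sums along any sequence of
partitions with mesh tending to `0` converge to the total variation. -/
theorem partition_sums_tendsto_variation {V : Type*} [NormedAddCommGroup V] [NormedSpace ℝ V]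
    (γ : ℝ → V) (a b : ℝ) (hab : a ≤ b)
    (hcont : ContinuousOn γ (Set.Icc a b))
    (hbv : eVariationOn γ (Set.Icc a b) ≠ ⊤)
    (n : ℕ → ℕ) (u : ℕ → ℕ → ℝ)
    (h0 : ∀ k, u k 0 = a) (hlast : ∀ k, u k (n k) = b)
    (hmono : ∀ k, ∀ i < n k, u k i < u k (i + 1))
    (hmesh : ∀ ε > 0, ∃ K, ∀ k ≥ K, ∀ i < n k, u k (i + 1) - u k i < ε) :
    Filter.Tendsto (fun k => ∑ i ∈ Finset.range (n k), ‖γ (u k (i + 1)) - γ (u k i)‖)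
      Filter.atTop (nhds (eVariationOn γ (Set.Icc a b)).toReal) :=
  partition_sums_tendsto_variation_general γ a b hab hcont hbv n u h0 hlast hmono hmesh
end

section
/- Let γ : [0,1] → ℝ be a continuous path of bounded variation with total variation L, and for x ∈ ℝ let c(x) denote the cardinality of the level set {t ∈ [0,1] : γ(t) = x} (possibly infinite). Then ∫_ℝ c(x) dx = L (Banach indicatrix / coarea formula for one-dimensional paths). -/
/-!
For a partition `u₀ ≤ ⋯ ≤ uₙ`, the intermediate value theorem gives
`|γ uᵢ₊₁ - γ uᵢ| ≤ |γ '' [uᵢ, uᵢ₊₁]|`, and the images of the essentially disjoint pieces are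
counted by the indicatrix `c`, so the variation is at most `∫ c`.

Conversely, let `Nₙ x` be the number of pieces `I` of the partition of `[a, b]` into `n + 1`
equal closed intervals with `x ∈ γ '' I`. Then `∫ Nₙ = ∑ |γ '' I| ≤ ∑ Var(γ, I) = Var(γ, [a, b])`,
and `c ≤ liminf Nₙ` pointwise, because any finite set of level points eventually has its points
in distinct pieces. Fatou's lemma concludes.
-/

open scoped ENNReal Topology
open MeasureTheory Set Filter

noncomputable def banachIndicatrix {α β : Type*} (γ : α → β) (s : Set α) (x : β) : ℝ≥0∞ :=
  {t ∈ s | γ t = x}.encard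

lemma Set.Finite.eventually_lt_dist {X ι : Type*} [MetricSpace X] {T : Set X} (hT : T.Finite)
    {l : Filter ι} {r : ι → ℝ} (hr : Tendsto r l (𝓝 0)) :
    ∀ᶠ n in l, ∀ s ∈ T, ∀ t ∈ T, s ≠ t → r n < dist s t := by
  have : ∀ᶠ n in l, ∀ p ∈ T ×ˢ T, p.1 ≠ p.2 → r n < dist p.1 p.2 := by
    refine (hT.prod hT).eventually_all.2 fun p _ => ?_
    by_cases hp : p.1 = p.2
    · exact Eventually.of_forall fun _ h => absurd hp h
    · exact (hr.eventually (gt_mem_nhds (dist_pos.2 hp))).mono fun _ h _ => h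
  filter_upwards [this] with n hn s hs t ht hst using hn (s, t) ⟨hs, ht⟩ hst

lemma ENat.toENNReal_le_of_forall_natCast_le {m : ℕ∞} {y : ℝ≥0∞}
    (h : ∀ k : ℕ, (k : ℕ∞) ≤ m → (k : ℝ≥0∞) ≤ y) : (m : ℝ≥0∞) ≤ y := by
  induction m using ENat.recTopCoe with
  | top => rw [ENat.toENNReal_top, ← ENNReal.iSup_natCast]; exact iSup_le fun k => h k le_top
  | coe m => exact h m le_rfl

theorem Set.Icc_subset_biUnion_Icc {X : Type*} [LinearOrder X] (N : ℕ) (a : ℕ → X) :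
    Icc (a 0) (a (N + 1)) ⊆ ⋃ i ∈ Finset.range (N + 1), Icc (a i) (a (i + 1)) := by
  induction N with
  | zero => simp
  | succ N ih => calc
    _ ⊆ Icc (a 0) (a (N + 1)) ∪ Icc (a (N + 1)) (a (N + 2)) := Icc_subset_Icc_union_Icc
    _ ⊆ _ := by simpa [Finset.range_add_one] using
                  union_subset_union_right (Icc (a (N + 1)) (a (N + 2))) ih

lemma mem_image_Icc_iff_mem_image_Ioo {α β : Type*} [PartialOrder α] {γ : α → β} {a b : α}
    {x : β} (ha : γ a ≠ x) (hb : γ b ≠ x) : x ∈ γ '' Icc a b ↔ x ∈ γ '' Ioo a b := by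
  refine ⟨?_, fun h => image_mono Ioo_subset_Icc_self h⟩
  rintro ⟨t, ⟨hat, htb⟩, rfl⟩
  exact ⟨t, ⟨hat.lt_of_ne (by rintro rfl; exact ha rfl),
    htb.lt_of_ne (by rintro rfl; exact hb rfl)⟩, rfl⟩

lemma Monotone.Icc_succ_subset_Icc {α : Type*} [Preorder α] {u : ℕ → α} (hu : Monotone u)
    {n i : ℕ} (hi : i ∈ Finset.range n) : Icc (u i) (u (i + 1)) ⊆ Icc (u 0) (u n) :=
  Icc_subset_Icc (hu (Nat.zero_le i)) (hu (Finset.mem_range.mp hi))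

noncomputable def equipartition (a b : ℝ) (n i : ℕ) : ℝ := a + i * ((b - a) / (n + 1))

section Equipartition

variable {a b : ℝ} {n : ℕ}

@[simp] lemma equipartition_zero : equipartition a b n 0 = a := by simp [equipartition]

@[simp] lemma equipartition_last : equipartition a b n (n + 1) = b := by
  simp only [equipartition, Nat.cast_add, Nat.cast_one]
  field_simp
  ring

lemma equipartition_succ_sub (i : ℕ) :
    equipartition a b n (i + 1) - equipartition a b n i = (b - a) / (n + 1) := by
  simp only [equipartition, Nat.cast_add, Nat.cast_one]
  ring

lemma equipartition_monotone (hab : a ≤ b) : Monotone (equipartition a b n) :=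
  monotone_nat_of_le_succ fun i => sub_nonneg.mp <| by
    rw [equipartition_succ_sub]; exact div_nonneg (sub_nonneg.mpr hab) (by positivity)

lemma tendsto_equipartition_mesh (a b : ℝ) :
    Tendsto (fun n : ℕ => (b - a) / (n + 1)) atTop (𝓝 0) := by
  simpa [div_eq_mul_inv] using (tendsto_one_div_add_atTop_nhds_zero_nat (𝕜 := ℝ)).const_mul (b - a)

end Equipartition

section Counting

variable {α β ι : Type*} {γ : α → β} {x : β} {I : Finset ι} {P : ι → Set α}

lemma indicator_image_le_encard_inter_preimage (γ : α → β) (x : β) (Q : Set α) :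
    (γ '' Q).indicator 1 x ≤ ((Q ∩ γ ⁻¹' {x}).encard : ℝ≥0∞) := by
  by_cases hx : x ∈ γ '' Q
  · obtain ⟨t, htQ, rfl⟩ := hx
    rw [indicator_of_mem (mem_image_of_mem γ htQ), Pi.one_apply]
    have hne : (Q ∩ γ ⁻¹' {γ t}).Nonempty := ⟨t, htQ, rfl⟩
    exact_mod_cast one_le_encard_iff_nonempty.mpr hne
  · simp [indicator_of_notMem hx]

lemma encard_le_indicator_image {T Q : Set α} (hT : T.Subsingleton) (hγ : ∀ t ∈ T, γ t = x)
    (hTQ : T ⊆ Q) : (T.encard : ℝ≥0∞) ≤ (γ '' Q).indicator 1 x := by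
  rcases T.eq_empty_or_nonempty with rfl | ⟨t, ht⟩
  · simp
  rw [indicator_of_mem (show x ∈ γ '' Q from ⟨t, hTQ ht, hγ t ht⟩), Pi.one_apply]
  exact_mod_cast encard_le_one_iff_subsingleton.mpr hT

lemma sum_indicator_image_le_banachIndicatrix {s : Set α} (hPs : ∀ i ∈ I, P i ⊆ s)
    (hP : (I : Set ι).PairwiseDisjoint P) (γ : α → β) (x : β) :
    ∑ i ∈ I, (γ '' P i).indicator 1 x ≤ banachIndicatrix γ s x := by
  calc ∑ i ∈ I, (γ '' P i).indicator 1 x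
      ≤ ∑ i ∈ I, ((P i ∩ γ ⁻¹' {x}).encard : ℝ≥0∞) :=
        Finset.sum_le_sum fun i _ => indicator_image_le_encard_inter_preimage γ x (P i)
    _ = ((⋃ i ∈ I, P i ∩ γ ⁻¹' {x}).encard : ℝ≥0∞) := by
        rw [← Finset.set_biUnion_coe,
          I.finite_toSet.encard_biUnion (hP.mono fun i => inter_subset_left), finsum_mem_coe_finset]
        exact (map_sum ENat.toENNRealRingHom _ _).symm
    _ ≤ banachIndicatrix γ s x := by
        refine ENat.toENNReal_le.mpr (encard_le_encard ?_)
        simp only [iUnion_subset_iff]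
        exact fun i hi t ⟨htP, htx⟩ => ⟨hPs i hi htP, htx⟩

lemma encard_le_sum_indicator_image {T : Set α} (hTP : T ⊆ ⋃ i ∈ I, P i)
    (hsep : ∀ i ∈ I, (T ∩ P i).Subsingleton) (hγ : ∀ t ∈ T, γ t = x) :
    (T.encard : ℝ≥0∞) ≤ ∑ i ∈ I, (γ '' P i).indicator 1 x := by
  have hT : T = ⋃ i ∈ I, T ∩ P i := by
    rw [← inter_iUnion₂]; exact (inter_eq_left.mpr hTP).symm
  calc (T.encard : ℝ≥0∞) ≤ ((∑ i ∈ I, (T ∩ P i).encard : ℕ∞) : ℝ≥0∞) := by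
        rw [ENat.toENNReal_le]; nth_rw 1 [hT]; exact I.set_encard_biUnion_le _
    _ = ∑ i ∈ I, ((T ∩ P i).encard : ℝ≥0∞) := map_sum ENat.toENNRealRingHom _ _
    _ ≤ ∑ i ∈ I, (γ '' P i).indicator 1 x := Finset.sum_le_sum fun i hi =>
        encard_le_indicator_image (hsep i hi) (fun t ht => hγ t ht.1) inter_subset_right

end Counting

section Real

variable {γ : ℝ → ℝ} {a b : ℝ}

lemma edist_le_volume_image_Icc (hab : a ≤ b) (hγ : ContinuousOn γ (Icc a b)) :
    edist (γ a) (γ b) ≤ volume (γ '' Icc a b) := by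
  calc edist (γ a) (γ b) = volume (uIcc (γ a) (γ b)) := by
        rw [Real.volume_interval, edist_dist, Real.dist_eq, abs_sub_comm]
    _ ≤ volume (γ '' Icc a b) := by
        refine measure_mono ?_
        simpa only [uIcc_of_le hab] using intermediate_value_uIcc (hγ.mono (uIcc_of_le hab).subset)

lemma volume_image_le_eVariationOn (γ : ℝ → ℝ) (s : Set ℝ) :
    volume (γ '' s) ≤ eVariationOn γ s := by
  refine (Real.volume_le_diam _).trans (Metric.ediam_le ?_)
  rintro _ ⟨t, ht, rfl⟩ _ ⟨t', ht', rfl⟩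
  exact eVariationOn.edist_le γ ht ht'

lemma measurableSet_image_Icc (hγ : ContinuousOn γ (Icc a b)) :
    MeasurableSet (γ '' Icc a b) :=
  (isCompact_Icc.image_of_continuousOn hγ).measurableSet

lemma lintegral_sum_indicator_image_Icc {u : ℕ → ℝ} {n : ℕ}
    (hγ : ∀ i ∈ Finset.range n, ContinuousOn γ (Icc (u i) (u (i + 1)))) :
    ∫⁻ x, ∑ i ∈ Finset.range n, (γ '' Icc (u i) (u (i + 1))).indicator 1 x
      = ∑ i ∈ Finset.range n, volume (γ '' Icc (u i) (u (i + 1))) := by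
  rw [lintegral_finsetSum (f := fun i => (γ '' Icc (u i) (u (i + 1))).indicator 1)
    _ fun i hi => measurable_one.indicator (measurableSet_image_Icc (hγ i hi))]
  exact Finset.sum_congr rfl fun i hi => lintegral_indicator_one (measurableSet_image_Icc (hγ i hi))

/-- The closed pieces of a partition overlap only at partition points, whose images form a
countable, hence null, set; off it they count like the disjoint open pieces. -/
theorem eVariationOn_le_lintegral_banachIndicatrix {s : Set ℝ} [s.OrdConnected]
    (hγ : ContinuousOn γ s) : eVariationOn γ s ≤ ∫⁻ x, banachIndicatrix γ s x := by
  refine iSup_le fun ⟨n, u, hu, hus⟩ => ?_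
  have hK : ∀ i, Icc (u i) (u (i + 1)) ⊆ s := fun i => Set.Icc_subset s (hus i) (hus _)
  have hcount : ∀ x ∉ range (γ ∘ u),
      ∑ i ∈ Finset.range n, (γ '' Icc (u i) (u (i + 1))).indicator 1 x
        ≤ banachIndicatrix γ s x := by
    intro x hx
    have hIoo : ∀ i, (γ '' Icc (u i) (u (i + 1))).indicator (1 : ℝ → ℝ≥0∞) x
        = (γ '' Ioo (u i) (u (i + 1))).indicator 1 x := fun i =>
      indicator_eq_indicator
        (mem_image_Icc_iff_mem_image_Ioo (fun h => hx ⟨i, h⟩) (fun h => hx ⟨i + 1, h⟩)) rfl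
    rw [Finset.sum_congr rfl fun i _ => hIoo i]
    exact sum_indicator_image_le_banachIndicatrix (fun i _ => Ioo_subset_Icc_self.trans (hK i))
      (fun i _ j _ hij => by simpa using hu.pairwise_disjoint_on_Ioo_succ hij) γ x
  calc ∑ i ∈ Finset.range n, edist (γ (u (i + 1))) (γ (u i))
      ≤ ∑ i ∈ Finset.range n, volume (γ '' Icc (u i) (u (i + 1))) :=
        Finset.sum_le_sum fun i _ => (edist_comm _ _).le.trans <|
          edist_le_volume_image_Icc (hu i.le_succ) (hγ.mono (hK i))
    _ = ∫⁻ x, ∑ i ∈ Finset.range n, (γ '' Icc (u i) (u (i + 1))).indicator 1 x :=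
        (lintegral_sum_indicator_image_Icc fun i _ => hγ.mono (hK i)).symm
    _ ≤ ∫⁻ x, banachIndicatrix γ s x :=
        lintegral_mono_ae (((countable_range _).ae_notMem volume).mono hcount)

lemma lintegral_sum_indicator_image_Icc_le_eVariationOn {u : ℕ → ℝ} (hu : Monotone u) {n : ℕ}
    (hγ : ContinuousOn γ (Icc (u 0) (u n))) :
    ∫⁻ x, ∑ i ∈ Finset.range n, (γ '' Icc (u i) (u (i + 1))).indicator 1 x
      ≤ eVariationOn γ (Icc (u 0) (u n)) := by
  rw [lintegral_sum_indicator_image_Icc (u := u) fun i hi => hγ.mono (hu.Icc_succ_subset_Icc hi)]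
  calc ∑ i ∈ Finset.range n, volume (γ '' Icc (u i) (u (i + 1)))
      ≤ ∑ i ∈ Finset.range n, eVariationOn γ (Icc (u i) (u (i + 1))) :=
        Finset.sum_le_sum fun i _ => volume_image_le_eVariationOn γ _
    _ = eVariationOn γ (Icc (u 0) (u n)) := by
        simpa using eVariationOn.sum γ (s := univ) hu (n := n) fun _ _ _ => mem_univ _

lemma banachIndicatrix_Icc_le_liminf (γ : ℝ → ℝ) (x : ℝ) :
    banachIndicatrix γ (Icc a b) x ≤ liminf (fun n => ∑ i ∈ Finset.range (n + 1),
      (γ '' Icc (equipartition a b n i) (equipartition a b n (i + 1))).indicator 1 x) atTop := by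
  refine ENat.toENNReal_le_of_forall_natCast_le fun k hk => ?_
  obtain ⟨T, hTS, hTk⟩ := exists_subset_encard_eq hk
  refine le_liminf_of_le (by isBoundedDefault) ?_
  filter_upwards [(finite_of_encard_eq_coe hTk).eventually_lt_dist (tendsto_equipartition_mesh a b)]
    with n hn
  rw [← ENat.toENNReal_coe, ← hTk]
  refine encard_le_sum_indicator_image ?_ ?_ fun t ht => (hTS ht).2
  · have := Icc_subset_biUnion_Icc n (equipartition a b n)
    rw [equipartition_zero, equipartition_last] at this
    exact fun t ht => this (hTS ht).1
  · rintro i - s ⟨hsT, hs⟩ t ⟨htT, ht⟩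
    by_contra hst
    have := Real.dist_le_of_mem_Icc hs ht
    rw [equipartition_succ_sub] at this
    exact (hn s hsT t htT hst).not_ge this

theorem lintegral_banachIndicatrix_Icc_le (hγ : ContinuousOn γ (Icc a b)) :
    ∫⁻ x, banachIndicatrix γ (Icc a b) x ≤ eVariationOn γ (Icc a b) := by
  rcases lt_or_ge b a with hba | hab
  · simp [banachIndicatrix, Icc_eq_empty_of_lt hba]
  have hu : ∀ n, Monotone (equipartition a b n) := fun n => equipartition_monotone hab
  have hγn : ∀ n, ContinuousOn γ (Icc (equipartition a b n 0) (equipartition a b n (n + 1))) :=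
    fun n => by simpa using hγ
  set N : ℕ → ℝ → ℝ≥0∞ := fun n x => ∑ i ∈ Finset.range (n + 1),
    (γ '' Icc (equipartition a b n i) (equipartition a b n (i + 1))).indicator 1 x
  have hNmeas : ∀ n, Measurable (N n) := fun n => Finset.measurable_sum _ fun i hi =>
    measurable_one.indicator <|
      measurableSet_image_Icc ((hγn n).mono ((hu n).Icc_succ_subset_Icc hi))
  have hNle : ∀ n, ∫⁻ x, N n x ≤ eVariationOn γ (Icc a b) := fun n => by
    simpa using lintegral_sum_indicator_image_Icc_le_eVariationOn (hu n) (hγn n)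
  calc ∫⁻ x, banachIndicatrix γ (Icc a b) x
      ≤ ∫⁻ x, liminf (fun n => N n x) atTop := lintegral_mono (banachIndicatrix_Icc_le_liminf γ)
    _ ≤ liminf (fun n => ∫⁻ x, N n x) atTop := lintegral_liminf_le hNmeas
    _ ≤ eVariationOn γ (Icc a b) := liminf_le_of_frequently_le' (Frequently.of_forall hNle)

theorem lintegral_banachIndicatrix_Icc (hγ : ContinuousOn γ (Icc a b)) :
    ∫⁻ x, banachIndicatrix γ (Icc a b) x = eVariationOn γ (Icc a b) :=
  le_antisymm (lintegral_banachIndicatrix_Icc_le hγ)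
    (eVariationOn_le_lintegral_banachIndicatrix hγ)

end Real

theorem banach_indicatrix_general (γ : ℝ → ℝ)
    (hcont : ContinuousOn γ (Set.Icc 0 1)) :
    ∫⁻ x : ℝ, ((Set.encard {t ∈ Set.Icc (0:ℝ) 1 | γ t = x} : ℕ∞) : ℝ≥0∞)
      = eVariationOn γ (Set.Icc 0 1) :=
  lintegral_banachIndicatrix_Icc hcont

/-- Banach indicatrix / coarea formula: for a continuous path `γ : [0,1] → ℝ` of bounded
variation, the integral over `ℝ` of the cardinality of the level sets equals the total
variation of `γ`. -/
theorem banach_indicatrix (γ : ℝ → ℝ)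
    (hcont : ContinuousOn γ (Set.Icc 0 1))
    (hbv : eVariationOn γ (Set.Icc 0 1) ≠ ⊤) :
    ∫⁻ x : ℝ, ((Set.encard {t ∈ Set.Icc (0:ℝ) 1 | γ t = x} : ℕ∞) : ℝ≥0∞)
      = eVariationOn γ (Set.Icc 0 1) :=
  banach_indicatrix_general γ hcont
end

section
/- Let γ : [0,1] → ℝ^d be a path of bounded variation with length L, and let X^n(γ) = ∫_{0<u₁<⋯<uₙ<1} dγ(u₁) ⊗ ⋯ ⊗ dγ(uₙ) be the degree-n term of its signature. Then ‖X^n(γ)‖ ≤ L^n / n! for all n ≥ 0, where the norm on the tensor power is the projective norm. -/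
/-!
Write `Δₚ = γ((p+1)/2^m) - γ(p/2^m)` for the increments of `γ` along the dyadic partition of
level `m`. The dyadic approximation `∑_{p₁<⋯<pₙ} Δ_{p₁} ⊗ ⋯ ⊗ Δ_{pₙ}` of `X^n` has projective norm
at most `∑_{p₁<⋯<pₙ} ‖Δ_{p₁}‖⋯‖Δ_{pₙ}‖ ≤ (∑ₚ ‖Δₚ‖)^n / n! ≤ L^n / n!`: every strictly increasing
tuple occurs `n!` times, once per ordering, among the terms of `(∑ₚ ‖Δₚ‖)^n`.

The bound passes to the limit once the approximations converge. Refining level `m` to `m + e`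
splits each `Δₚ` into the finer increments it telescopes into; the two approximations then differ
by the terms of fine tuples having two consecutive entries in the same coarse interval, which add
up to at most `(n-1) ε L^(n-1) / (n-1)!` when `ε` bounds the variation of `γ` on each coarse
interval. As `γ` is continuous, `x ↦ Var(γ, [0,x])` is uniformly continuous on `[0,1]`, so
`ε → 0` with the mesh and the approximations form a Cauchy sequence.
-/

open scoped ENNReal Classical

/-- The approximation to the signature coefficient of the word `w` of the path
`γ : [s,t] → ℝ^d` given by the iterated Riemann–Stieltjes sum along the dyadic partition
of `[s,t]` of mesh `(t-s)/2^m`. -/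
noncomputable def dyadicSigSum (d : ℕ) (γ : ℝ → PiLp 1 fun _ : Fin d => ℝ) (s t : ℝ)
    {n : ℕ} (w : Fin n → Fin d) (m : ℕ) : ℝ :=
  ∑ j ∈ Finset.univ.filter (fun j : Fin n → Fin (2 ^ m) => StrictMono j),
    ∏ i : Fin n,
      (γ (s + (t - s) * ((j i : ℝ) + 1) / 2 ^ m) (w i) -
       γ (s + (t - s) * (j i : ℝ) / 2 ^ m) (w i))

/-- The signature coefficient `C_{s,t}(w) = ∫_{s<u₁<⋯<uₙ<t} dγ_{w₁}(u₁)⋯dγ_{wₙ}(uₙ)` of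
the word `w`, defined as the limit of iterated Riemann–Stieltjes sums along dyadic
partitions (for continuous paths of bounded variation this limit exists and is the
iterated integral over the simplex). -/
noncomputable def sigCoeff (d : ℕ) (γ : ℝ → PiLp 1 fun _ : Fin d => ℝ) (s t : ℝ)
    {n : ℕ} (w : Fin n → Fin d) : ℝ :=
  Filter.limUnder Filter.atTop (dyadicSigSum d γ s t w)

/-- The degree-`n` signature term `X^n_{s,t}(γ) ∈ (ℝ^d)^{⊗n}`, recorded by its coordinates
in the basis of words of length `n`, and normed with the `ℓ¹` norm of the coordinates:
for the `ℓ¹` norm on `ℝ^d` this is exactly the projective tensor norm on `(ℝ^d)^{⊗n}`. -/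
noncomputable def sig (d : ℕ) (γ : ℝ → PiLp 1 fun _ : Fin d => ℝ) (s t : ℝ) (n : ℕ) :
    PiLp 1 fun _ : Fin n → Fin d => ℝ :=
  WithLp.toLp 1 fun w => sigCoeff d γ s t w

open Finset Filter Topology

section StrictMonoTuples

variable {ι : Type*} [Fintype ι] [LinearOrder ι]

theorem sum_strictMono_prod_le_pow_div_factorial (a : ι → ℝ) (ha : ∀ p, 0 ≤ a p) (k : ℕ) :
    ∑ j ∈ univ.filter (fun j : Fin k → ι => StrictMono j), ∏ i, a (j i)
      ≤ (∑ p, a p) ^ k / k.factorial := by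
  set S := univ.filter (fun j : Fin k → ι => StrictMono j)
  -- a strictly monotone tuple is determined by its range, so `(σ, j) ↦ j ∘ σ` is injective
  have hinj : Set.InjOn (fun q : Equiv.Perm (Fin k) × (Fin k → ι) => q.2 ∘ q.1)
      ((univ ×ˢ S : Finset (Equiv.Perm (Fin k) × (Fin k → ι))) : Set _) := by
    rintro ⟨σ, j⟩ hj ⟨σ', j'⟩ hj' h
    simp only [mem_coe, mem_product, mem_filter, mem_univ, true_and, S] at hj hj' h
    have hjj' : j = j' := (hj.range_inj hj').1 <| by
      rw [← σ.surjective.range_comp, h, σ'.surjective.range_comp]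
    subst hjj'
    exact Prod.ext (Equiv.ext fun i => hj.injective (congrFun h i)) rfl
  rw [le_div_iff₀ (by positivity), Fintype.sum_pow]
  calc (∑ j ∈ S, ∏ i, a (j i)) * k.factorial
      = ∑ q ∈ (univ : Finset (Equiv.Perm (Fin k))) ×ˢ S, ∏ i, a (q.2 (q.1 i)) := by
        rw [sum_product_right, mul_comm, mul_sum]
        refine sum_congr rfl fun j _ => ?_
        have (σ : Equiv.Perm (Fin k)) : ∏ i, a (j (σ i)) = ∏ i, a (j i) :=
          Fintype.prod_equiv σ _ _ fun i => rfl
        simp only [this, sum_const, card_univ, Fintype.card_perm, Fintype.card_fin, nsmul_eq_mul]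
    _ = ∑ x ∈ (univ ×ˢ S).image fun q : Equiv.Perm (Fin k) × (Fin k → ι) => q.2 ∘ q.1,
          ∏ i, a (x i) := (sum_image (f := fun x => ∏ i, a (x i)) hinj).symm
    _ ≤ ∑ x : Fin k → ι, ∏ i, a (x i) :=
        sum_le_univ_sum_of_nonneg fun x => prod_nonneg fun i _ => ha _

theorem sum_prod_strictMono_of_comp_eq_le {β : Type*} [DecidableEq β] (a : ι → ℝ)
    (ha : ∀ p, 0 ≤ a p) {blk : ι → β} {ε : ℝ}
    (hε : ∀ b, ∑ y ∈ univ.filter (fun y => blk y = b), a y ≤ ε) {k : ℕ} (i : Fin (k + 1)) :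
    ∑ u ∈ univ.filter (fun u : Fin (k + 2) → ι =>
        StrictMono u ∧ blk (u i.castSucc) = blk (u i.succ)), ∏ t, a (u t)
      ≤ ε * ∑ v ∈ univ.filter (fun v : Fin (k + 1) → ι => StrictMono v), ∏ t, a (v t) := by
  let S := univ.filter (fun v : Fin (k + 1) → ι => StrictMono v)
  let T := S.sigma fun v => univ.filter (fun y => blk y = blk (v i))
  let g : (_ : Fin (k + 1) → ι) × ι → Fin (k + 2) → ι := fun q => i.succ.insertNth q.2 q.1
  -- remove the colliding entry `u i.succ` and record it separately
  have hsub : univ.filter (fun u : Fin (k + 2) → ι =>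
      StrictMono u ∧ blk (u i.castSucc) = blk (u i.succ)) ⊆ T.image g := by
    intro u hu
    simp only [mem_filter, mem_univ, true_and] at hu
    refine mem_image.2 ⟨⟨i.succ.removeNth u, u i.succ⟩, ?_, by simp [g]⟩
    simp only [T, S, mem_sigma, mem_filter, mem_univ, true_and, Fin.removeNth_apply,
      Fin.succAbove_succ_self]
    exact ⟨hu.1.comp (Fin.strictMono_succAbove _), hu.2.symm⟩
  have hnonneg {m : ℕ} (v : Fin m → ι) : 0 ≤ ∏ t, a (v t) := prod_nonneg fun t _ => ha _
  calc _ ≤ ∑ u ∈ T.image g, ∏ t, a (u t) :=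
        sum_le_sum_of_subset_of_nonneg hsub fun u _ _ => hnonneg u
    _ ≤ ∑ q ∈ T, ∏ t, a (g q t) := sum_image_le_of_nonneg fun u _ => hnonneg u
    _ = ∑ v ∈ S, (∑ y ∈ univ.filter (fun y => blk y = blk (v i)), a y) * ∏ t, a (v t) := by
        simp [T, g, sum_sigma, sum_mul, Fin.prod_univ_succAbove _ i.succ]
    _ ≤ ∑ v ∈ S, ε * ∏ t, a (v t) :=
        sum_le_sum fun v _ => mul_le_mul_of_nonneg_right (hε _) (hnonneg v)
    _ = ε * ∑ v ∈ S, ∏ t, a (v t) := (mul_sum _ _ _).symm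

theorem sum_prod_strictMono_of_not_strictMono_comp_le {β : Type*} [LinearOrder β] (a : ι → ℝ)
    (ha : ∀ p, 0 ≤ a p) {blk : ι → β} (hblk : Monotone blk) {ε : ℝ}
    (hε : ∀ b, ∑ y ∈ univ.filter (fun y => blk y = b), a y ≤ ε) (k : ℕ) :
    ∑ u ∈ univ.filter (fun u : Fin (k + 2) → ι => StrictMono u ∧ ¬StrictMono (blk ∘ u)),
        ∏ t, a (u t)
      ≤ (k + 1) * ε * ∑ v ∈ univ.filter (fun v : Fin (k + 1) → ι => StrictMono v),
        ∏ t, a (v t) := by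
  let B (i : Fin (k + 1)) := univ.filter (fun u : Fin (k + 2) → ι =>
    StrictMono u ∧ blk (u i.castSucc) = blk (u i.succ))
  -- `blk ∘ u` is monotone, so if it is not strictly monotone two neighbours collide
  have hsub : univ.filter (fun u : Fin (k + 2) → ι => StrictMono u ∧ ¬StrictMono (blk ∘ u)) ⊆
      (univ.sigma B).image Sigma.snd := by
    intro u hu
    simp only [mem_filter, mem_univ, true_and] at hu
    obtain ⟨hu, hnot⟩ := hu
    obtain ⟨i, hi⟩ := not_forall.1 (mt Fin.strictMono_iff_lt_succ.2 hnot)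
    refine mem_image.2 ⟨⟨i, u⟩, ?_, rfl⟩
    simp only [B, mem_sigma, mem_univ, mem_filter, true_and]
    exact ⟨hu, ((hblk (hu (Fin.castSucc_lt_succ (i := i))).le).eq_or_lt.resolve_right hi)⟩
  have hnonneg (u : Fin (k + 2) → ι) : 0 ≤ ∏ t, a (u t) := prod_nonneg fun t _ => ha _
  calc _ ≤ ∑ u ∈ (univ.sigma B).image Sigma.snd, ∏ t, a (u t) :=
        sum_le_sum_of_subset_of_nonneg hsub fun u _ _ => hnonneg u
    _ ≤ ∑ i, ∑ u ∈ B i, ∏ t, a (u t) :=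
        (sum_image_le_of_nonneg fun u _ => hnonneg u).trans_eq (sum_sigma _ _ _)
    _ ≤ ∑ _i : Fin (k + 1), ε * ∑ v ∈ univ.filter (fun v : Fin (k + 1) → ι => StrictMono v),
          ∏ t, a (v t) :=
        sum_le_sum fun i _ => sum_prod_strictMono_of_comp_eq_le a ha hε i
    _ = _ := by simp [mul_assoc]

end StrictMonoTuples

section IteratedSum

variable {ι ι' κ : Type*}

theorem sum_abs_sum_prod_le_sum_prod_norm [Fintype κ] (Δ : ι → PiLp 1 fun _ : κ => ℝ) {n : ℕ}
    (B : Finset (Fin n → ι)) :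
    ∑ w : Fin n → κ, |∑ u ∈ B, ∏ i, Δ (u i) (w i)| ≤ ∑ u ∈ B, ∏ i, ‖Δ (u i)‖ := by
  calc _ ≤ ∑ w : Fin n → κ, ∑ u ∈ B, ∏ i, |Δ (u i) (w i)| :=
        sum_le_sum fun w _ =>
          (abs_sum_le_sum_abs _ _).trans_eq (sum_congr rfl fun u _ => abs_prod _ _)
    _ = ∑ u ∈ B, ∏ i, ‖Δ (u i)‖ := by
        simp only [sum_comm (s := univ), PiLp.norm_eq_of_L1, Real.norm_eq_abs, Fintype.prod_sum]

variable [Fintype ι] [LinearOrder ι]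

/-- The coefficient of the word `w` in `∑_{j₁<⋯<jₙ} Δ_{j₁} ⊗ ⋯ ⊗ Δ_{jₙ}`. -/
def iteratedSum (Δ : ι → PiLp 1 fun _ : κ => ℝ) {n : ℕ} (w : Fin n → κ) : ℝ :=
  ∑ j ∈ univ.filter (fun j : Fin n → ι => StrictMono j), ∏ i, Δ (j i) (w i)

theorem sum_abs_iteratedSum_le [Fintype κ] (Δ : ι → PiLp 1 fun _ : κ => ℝ) (n : ℕ) :
    ∑ w : Fin n → κ, |iteratedSum Δ w| ≤ (∑ p, ‖Δ p‖) ^ n / n.factorial :=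
  (sum_abs_sum_prod_le_sum_prod_norm Δ _).trans
    (sum_strictMono_prod_le_pow_div_factorial _ (fun _ => norm_nonneg _) n)

variable [Fintype ι'] {Δ : ι → PiLp 1 fun _ : κ => ℝ}
  {Δ' : ι' → PiLp 1 fun _ : κ => ℝ} {blk : ι' → ι}

theorem iteratedSum_eq_sum_strictMono_comp
    (hΔ : ∀ p, Δ p = ∑ q ∈ univ.filter (fun q => blk q = p), Δ' q) {n : ℕ} (w : Fin n → κ) :
    iteratedSum Δ w = ∑ u ∈ univ.filter (fun u : Fin n → ι' => StrictMono (blk ∘ u)),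
      ∏ i, Δ' (u i) (w i) := by
  rw [← sum_fiberwise_of_maps_to (g := fun u => blk ∘ u)
    (t := univ.filter fun j : Fin n → ι => StrictMono j) (by simp)]
  refine sum_congr rfl fun j hj => ?_
  simp only [hΔ, WithLp.ofLp_sum, Finset.sum_apply, prod_univ_sum]
  refine sum_congr (ext fun u => ?_) fun _ _ => rfl
  simp only [Fintype.mem_piFinset, mem_filter, mem_univ, true_and, funext_iff, Function.comp_apply]
  simp only [mem_filter, mem_univ, true_and] at hj
  exact ⟨fun h => ⟨by rwa [show blk ∘ u = j from funext h], h⟩, And.right⟩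

variable [LinearOrder ι']

theorem iteratedSum_sub_iteratedSum_eq (hblk : Monotone blk)
    (hΔ : ∀ p, Δ p = ∑ q ∈ univ.filter (fun q => blk q = p), Δ' q) {n : ℕ} (w : Fin n → κ) :
    iteratedSum Δ' w - iteratedSum Δ w =
      ∑ u ∈ univ.filter (fun u : Fin n → ι' => StrictMono u ∧ ¬StrictMono (blk ∘ u)),
        ∏ i, Δ' (u i) (w i) := by
  have hsm (u : Fin n → ι') (h : StrictMono (blk ∘ u)) : StrictMono u :=
    fun x y hxy => lt_of_not_ge fun h' => (h hxy).not_ge (hblk h')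
  have hfilter : univ.filter (fun u : Fin n → ι' => StrictMono u ∧ StrictMono (blk ∘ u)) =
      univ.filter fun u => StrictMono (blk ∘ u) :=
    filter_congr fun u _ => ⟨And.right, fun h => ⟨hsm u h, h⟩⟩
  rw [iteratedSum_eq_sum_strictMono_comp hΔ, iteratedSum, ← sum_filter_add_sum_filter_not
    (univ.filter fun u : Fin n → ι' => StrictMono u) (fun u => StrictMono (blk ∘ u)),
    filter_filter, filter_filter, hfilter, add_sub_cancel_left]

theorem sum_abs_iteratedSum_sub_le [Fintype κ] (hblk : Monotone blk)
    (hΔ : ∀ p, Δ p = ∑ q ∈ univ.filter (fun q => blk q = p), Δ' q) {ε : ℝ} (hε : 0 ≤ ε)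
    (hblock : ∀ p, ∑ q ∈ univ.filter (fun q => blk q = p), ‖Δ' q‖ ≤ ε) (n : ℕ) :
    ∑ w : Fin n → κ, |iteratedSum Δ' w - iteratedSum Δ w|
      ≤ (n - 1 : ℕ) * ε * ((∑ q, ‖Δ' q‖) ^ (n - 1) / (n - 1).factorial) := by
  simp_rw [iteratedSum_sub_iteratedSum_eq hblk hΔ]
  refine (sum_abs_sum_prod_le_sum_prod_norm Δ' _).trans ?_
  rcases n with _ | _ | k
  · rw [filter_false_of_mem fun u _ h => h.2 (Subsingleton.strictMono _)]
    simp
  · rw [filter_false_of_mem fun u _ h => h.2 (Fin.strictMono_iff_lt_succ.2 finZeroElim)]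
    simp
  · calc _ ≤ (k + 1) * ε * ∑ v ∈ univ.filter (fun v : Fin (k + 1) → ι' => StrictMono v),
          ∏ t, ‖Δ' (v t)‖ :=
          sum_prod_strictMono_of_not_strictMono_comp_le (fun q => ‖Δ' q‖)
            (fun _ => norm_nonneg _) hblk hblock k
      _ ≤ _ := by
          push_cast
          gcongr
          exact sum_strictMono_prod_le_pow_div_factorial _ (fun _ => norm_nonneg _) _

end IteratedSum

theorem BoundedVariationOn.continuousOn_variationOnFromTo {α E : Type*} [LinearOrder α]
    [TopologicalSpace α] [OrderTopology α] [PseudoEMetricSpace E] {f : α → E} {s : Set α}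
    (hf : BoundedVariationOn f s) (hc : ContinuousOn f s) {a : α} (ha : a ∈ s) :
    ContinuousOn (variationOnFromTo f s a) s := by
  intro x hx
  have htoReal := ENNReal.tendsto_toReal ENNReal.zero_ne_top
  have hsmall : Tendsto (variationOnFromTo f s x) (𝓝[s] x) (𝓝 0) := by
    have hr := hf.tendsto_eVariationOn_Icc_zero_right x ((hc x hx).mono Set.inter_subset_left)
    have hl := hf.tendsto_eVariationOn_Icc_zero_left ((hc x hx).mono Set.inter_subset_left)
    refine squeeze_zero_norm (fun y => ?_) (by simpa using (htoReal.comp hr).add (htoReal.comp hl))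
    rcases le_total x y with h | h
    · rw [variationOnFromTo.eq_of_le _ _ h, Real.norm_of_nonneg ENNReal.toReal_nonneg]
      exact le_add_of_nonneg_right ENNReal.toReal_nonneg
    · rw [variationOnFromTo.eq_of_ge _ _ h, norm_neg, Real.norm_of_nonneg ENNReal.toReal_nonneg]
      exact le_add_of_nonneg_left ENNReal.toReal_nonneg
  have hlim := (tendsto_const_nhds (x := variationOnFromTo f s a x)).add hsmall
  rw [add_zero] at hlim
  exact hlim.congr' (eventually_nhdsWithin_of_forall fun y hy =>
    variationOnFromTo.add hf.locallyBoundedVariationOn ha hx hy)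

theorem BoundedVariationOn.exists_pos_toReal_eVariationOn_lt {E : Type*} [PseudoEMetricSpace E]
    {f : ℝ → E} {s : Set ℝ} (hs : IsCompact s) (hf : BoundedVariationOn f s)
    (hc : ContinuousOn f s) {ε : ℝ} (hε : 0 < ε) :
    ∃ δ > 0, ∀ x ∈ s, ∀ y ∈ s, x ≤ y → y - x < δ →
      (eVariationOn f (s ∩ Set.Icc x y)).toReal < ε := by
  rcases s.eq_empty_or_nonempty with rfl | ⟨a, ha⟩
  · exact ⟨1, one_pos, by simp⟩
  obtain ⟨δ, hδ, hV⟩ := Metric.uniformContinuousOn_iff.1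
    (hs.uniformContinuousOn_of_continuous (hf.continuousOn_variationOnFromTo hc ha)) ε hε
  refine ⟨δ, hδ, fun x hx y hy hxy hyx => ?_⟩
  -- the variation on `[x, y]` is an increment of the uniformly continuous `variationOnFromTo`
  have hadd := variationOnFromTo.add hf.locallyBoundedVariationOn ha hx hy
  calc (eVariationOn f (s ∩ Set.Icc x y)).toReal = variationOnFromTo f s x y :=
        (variationOnFromTo.eq_of_le _ _ hxy).symm
    _ ≤ dist (variationOnFromTo f s a x) (variationOnFromTo f s a y) := by
        rw [Real.dist_eq, abs_sub_comm, ← hadd, add_sub_cancel_left]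
        exact le_abs_self _
    _ < ε := hV x hx y hy <| by rwa [Real.dist_eq, abs_sub_comm, abs_of_nonneg (sub_nonneg.2 hxy)]

theorem BoundedVariationOn.sum_dist_le_toReal {α E : Type*} [LinearOrder α] [PseudoMetricSpace E]
    {f : α → E} {s : Set α} (hf : BoundedVariationOn f s) {u : ℕ → α} {m n : ℕ}
    (hu : MonotoneOn u (Set.Icc m n)) (us : ∀ i ∈ Set.Icc m n, u i ∈ s) :
    ∑ i ∈ Ico m n, dist (f (u (i + 1))) (f (u i)) ≤ (eVariationOn f s).toReal := by
  rw [← ENNReal.ofReal_le_iff_le_toReal hf, ENNReal.ofReal_sum_of_nonneg fun _ _ => dist_nonneg]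
  simpa only [← edist_dist] using eVariationOn.sum_le_of_monotoneOn_Icc (f := f) hu us

section Dyadic

theorem natCast_div_two_pow_mem_Icc {q m : ℕ} (h : q ≤ 2 ^ m) :
    (q : ℝ) / 2 ^ m ∈ Set.Icc 0 1 :=
  ⟨by positivity, div_le_one_of_le₀ (by exact_mod_cast h) (by positivity)⟩

theorem natCast_mul_pow_div_pow_add (q m e : ℕ) :
    ((q * 2 ^ e : ℕ) : ℝ) / 2 ^ (m + e) = q / 2 ^ m := by
  push_cast
  rw [pow_add]
  field_simp

variable {E : Type*} [SeminormedAddCommGroup E] (γ : ℝ → E)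

noncomputable def dyadicIncr (m p : ℕ) : E := γ (↑(p + 1) / 2 ^ m) - γ (↑p / 2 ^ m)

theorem dyadicIncr_eq_sum_Ico (m e p : ℕ) :
    dyadicIncr γ m p = ∑ q ∈ Ico (p * 2 ^ e) ((p + 1) * 2 ^ e), dyadicIncr γ (m + e) q := by
  simp only [dyadicIncr]
  rw [sum_Ico_sub (fun q : ℕ => γ (q / 2 ^ (m + e))) (by gcongr; omega),
    natCast_mul_pow_div_pow_add, natCast_mul_pow_div_pow_add]

/-- The level-`m` dyadic interval containing the `q`-th interval of level `m + e`. -/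
def dyadicBlock (m e : ℕ) (q : Fin (2 ^ (m + e))) : Fin (2 ^ m) :=
  ⟨q / 2 ^ e, Nat.div_lt_of_lt_mul (q.2.trans_eq (by rw [pow_add, mul_comm]))⟩

theorem dyadicBlock_monotone (m e : ℕ) : Monotone (dyadicBlock m e) :=
  fun _ _ h => Fin.mk_le_mk.2 (Nat.div_le_div_right h)

theorem sum_filter_dyadicBlock_eq {M : Type*} [AddCommMonoid M] (f : ℕ → M) (m e : ℕ)
    (p : Fin (2 ^ m)) :
    ∑ q ∈ univ.filter (fun q => dyadicBlock m e q = p), f q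
      = ∑ q ∈ Ico ((p : ℕ) * 2 ^ e) (((p : ℕ) + 1) * 2 ^ e), f q := by
  simp only [sum_filter, dyadicBlock, Fin.ext_iff]
  rw [Fin.sum_univ_eq_sum_range (fun q => if q / 2 ^ e = (p : ℕ) then f q else (0 : M)),
    ← sum_filter]
  refine sum_congr (ext fun q => ?_) fun _ _ => rfl
  have hp : ((p : ℕ) + 1) * 2 ^ e ≤ 2 ^ (m + e) := by rw [pow_add]; gcongr; exact p.2
  simp only [mem_filter, mem_range, mem_Ico, Nat.div_eq_iff (Nat.two_pow_pos e)]
  have h2e := Nat.two_pow_pos e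
  rw [add_mul, one_mul] at hp ⊢
  generalize (p : ℕ) * 2 ^ e = a at *
  generalize 2 ^ (m + e) = N at *
  omega

theorem dyadicIncr_eq_sum_filter_dyadicBlock (m e : ℕ) (p : Fin (2 ^ m)) :
    dyadicIncr γ m p
      = ∑ q ∈ univ.filter (fun q => dyadicBlock m e q = p), dyadicIncr γ (m + e) q := by
  rw [sum_filter_dyadicBlock_eq (fun q => dyadicIncr γ (m + e) q), dyadicIncr_eq_sum_Ico γ m e]

variable {γ}

theorem sum_norm_dyadicIncr_le (hγ : BoundedVariationOn γ (Set.Icc 0 1)) {m a b : ℕ}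
    (hb : b ≤ 2 ^ m) :
    ∑ q ∈ Ico a b, ‖dyadicIncr γ m q‖
      ≤ (eVariationOn γ (Set.Icc 0 1 ∩ Set.Icc (a / 2 ^ m) (b / 2 ^ m))).toReal := by
  simp only [dyadicIncr, ← dist_eq_norm]
  refine (hγ.mono Set.inter_subset_left).sum_dist_le_toReal (u := fun q : ℕ => (q : ℝ) / 2 ^ m)
    (fun q _ r _ hqr => by simp only; gcongr) fun q hq => ?_
  refine ⟨natCast_div_two_pow_mem_Icc (hq.2.trans hb), ?_, ?_⟩ <;> gcongr
  exacts [hq.1, hq.2]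

theorem sum_norm_dyadicIncr_le_toReal_eVariationOn (hγ : BoundedVariationOn γ (Set.Icc 0 1))
    (m : ℕ) : ∑ p : Fin (2 ^ m), ‖dyadicIncr γ m p‖ ≤ (eVariationOn γ (Set.Icc 0 1)).toReal := by
  rw [Fin.sum_univ_eq_sum_range (fun p => ‖dyadicIncr γ m p‖), range_eq_Ico]
  simpa using sum_norm_dyadicIncr_le (a := 0) hγ le_rfl

theorem sum_norm_dyadicIncr_filter_dyadicBlock_le (hγ : BoundedVariationOn γ (Set.Icc 0 1))
    (m e : ℕ) (p : Fin (2 ^ m)) :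
    ∑ q ∈ univ.filter (fun q => dyadicBlock m e q = p), ‖dyadicIncr γ (m + e) q‖
      ≤ (eVariationOn γ
          (Set.Icc 0 1 ∩ Set.Icc ((p : ℕ) / 2 ^ m) (((p : ℕ) + 1 : ℕ) / 2 ^ m))).toReal := by
  have hp : ((p : ℕ) + 1) * 2 ^ e ≤ 2 ^ (m + e) := by rw [pow_add]; gcongr; exact p.2
  rw [sum_filter_dyadicBlock_eq (fun q => ‖dyadicIncr γ (m + e) q‖),
    ← natCast_mul_pow_div_pow_add p m e, ← natCast_mul_pow_div_pow_add ((p : ℕ) + 1) m e]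
  exact sum_norm_dyadicIncr_le hγ hp

end Dyadic

section Signature

variable {d : ℕ} {γ : ℝ → PiLp 1 fun _ : Fin d => ℝ}

theorem norm_sig (s t : ℝ) (n : ℕ) :
    ‖sig d γ s t n‖ = ∑ w : Fin n → Fin d, |sigCoeff d γ s t w| := by
  simp [sig, PiLp.norm_eq_of_L1]

theorem dyadicSigSum_eq_iteratedSum {n : ℕ} (w : Fin n → Fin d) (m : ℕ) :
    dyadicSigSum d γ 0 1 w m = iteratedSum (fun p : Fin (2 ^ m) => dyadicIncr γ m p) w := by
  simp [dyadicSigSum, iteratedSum, dyadicIncr]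

theorem sum_abs_dyadicSigSum_le (hγ : BoundedVariationOn γ (Set.Icc 0 1)) (n m : ℕ) :
    ∑ w : Fin n → Fin d, |dyadicSigSum d γ 0 1 w m|
      ≤ (eVariationOn γ (Set.Icc 0 1)).toReal ^ n / n.factorial := by
  simp_rw [dyadicSigSum_eq_iteratedSum]
  refine (sum_abs_iteratedSum_le _ n).trans ?_
  gcongr
  exact sum_norm_dyadicIncr_le_toReal_eVariationOn hγ m

theorem sum_abs_dyadicSigSum_add_sub_le (hγ : BoundedVariationOn γ (Set.Icc 0 1)) {m : ℕ}
    {ε : ℝ} (hε : 0 ≤ ε)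
    (hblock : ∀ p : Fin (2 ^ m), (eVariationOn γ
      (Set.Icc 0 1 ∩ Set.Icc ((p : ℕ) / 2 ^ m) (((p : ℕ) + 1 : ℕ) / 2 ^ m))).toReal ≤ ε)
    (n e : ℕ) :
    ∑ w : Fin n → Fin d, |dyadicSigSum d γ 0 1 w (m + e) - dyadicSigSum d γ 0 1 w m|
      ≤ (n - 1 : ℕ) * ε *
        ((eVariationOn γ (Set.Icc 0 1)).toReal ^ (n - 1) / (n - 1).factorial) := by
  simp_rw [dyadicSigSum_eq_iteratedSum]
  refine (sum_abs_iteratedSum_sub_le (dyadicBlock_monotone m e)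
    (dyadicIncr_eq_sum_filter_dyadicBlock γ m e) hε
    (fun p => (sum_norm_dyadicIncr_filter_dyadicBlock_le hγ m e p).trans (hblock p)) n).trans ?_
  gcongr
  exact sum_norm_dyadicIncr_le_toReal_eVariationOn hγ (m + e)

theorem cauchySeq_dyadicSigSum (hγ : BoundedVariationOn γ (Set.Icc 0 1))
    (hc : ContinuousOn γ (Set.Icc 0 1)) {n : ℕ} (w : Fin n → Fin d) :
    CauchySeq (dyadicSigSum d γ 0 1 w) := by
  set C := (n - 1 : ℕ) * ((eVariationOn γ (Set.Icc 0 1)).toReal ^ (n - 1) / (n - 1).factorial)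
  rw [Metric.cauchySeq_iff']
  intro ε hε
  obtain ⟨δ, hδ, hvar⟩ :=
    hγ.exists_pos_toReal_eVariationOn_lt isCompact_Icc hc (ε := ε / (C + 1)) (by positivity)
  obtain ⟨m, hm⟩ := exists_pow_lt_of_lt_one hδ (by norm_num : (1 / 2 : ℝ) < 1)
  have hblock (p : Fin (2 ^ m)) : (eVariationOn γ
      (Set.Icc 0 1 ∩ Set.Icc ((p : ℕ) / 2 ^ m) (((p : ℕ) + 1 : ℕ) / 2 ^ m))).toReal
        ≤ ε / (C + 1) := by
    refine (hvar _ (natCast_div_two_pow_mem_Icc p.2.le) _ (natCast_div_two_pow_mem_Icc p.2)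
      (by gcongr; simp) ?_).le
    rwa [← sub_div, Nat.cast_succ, add_sub_cancel_left, ← one_div_pow]
  refine ⟨m, fun m' hm' => ?_⟩
  obtain ⟨e, rfl⟩ := Nat.exists_eq_add_of_le hm'
  calc dist (dyadicSigSum d γ 0 1 w (m + e)) (dyadicSigSum d γ 0 1 w m)
      ≤ ∑ w' : Fin n → Fin d, |dyadicSigSum d γ 0 1 w' (m + e) - dyadicSigSum d γ 0 1 w' m| :=
        (Real.dist_eq _ _).trans_le (single_le_sum
          (f := fun w' => |dyadicSigSum d γ 0 1 w' (m + e) - dyadicSigSum d γ 0 1 w' m|)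
          (fun _ _ => abs_nonneg _) (mem_univ w))
    _ ≤ ε / (C + 1) * C :=
        (sum_abs_dyadicSigSum_add_sub_le hγ (by positivity) hblock n e).trans_eq (by ring)
    _ < ε := by
        rw [div_mul_eq_mul_div, div_lt_iff₀ (by positivity)]
        nlinarith

end Signature

/-- The factorial decay of the signature: for a continuous path of bounded variation of
`ℓ¹`-length `L`, the degree-`n` signature term satisfies `‖X^n(γ)‖ ≤ L^n/n!` in the
projective tensor norm. -/
theorem signature_factorial_decay (d : ℕ) (γ : ℝ → PiLp 1 fun _ : Fin d => ℝ)
    (L : ℝ) (hL0 : 0 ≤ L)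
    (hcont : ContinuousOn γ (Set.Icc 0 1))
    (hL : eVariationOn γ (Set.Icc 0 1) = ENNReal.ofReal L) (n : ℕ) :
    ‖sig d γ 0 1 n‖ ≤ L ^ n / n.factorial := by
  have hγ : BoundedVariationOn γ (Set.Icc 0 1) := by
    rw [BoundedVariationOn, hL]
    exact ENNReal.ofReal_ne_top
  have hlim (w : Fin n → Fin d) :
      Tendsto (dyadicSigSum d γ 0 1 w) atTop (𝓝 (sigCoeff d γ 0 1 w)) :=
    (cauchySeq_dyadicSigSum hγ hcont w).tendsto_limUnder
  rw [norm_sig, ← ENNReal.toReal_ofReal hL0, ← hL]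
  exact le_of_tendsto (tendsto_finsetSum _ fun w _ => (hlim w).abs)
    (Eventually.of_forall (sum_abs_dyadicSigSum_le hγ n))
end

section
/- Let γ be an axis path of shape (e_{i₁},…,e_{iₙ}) (reduced, i_k ≠ i_{k+1}, all rₖ ≠ 0). If w' is any square-free word with |w'| ≥ n+1, then the signature coefficient C(w') = 0; thus w = e_{i₁}⋯e_{iₙ} is the unique longest square-free word with nonzero coefficient. -/
open scoped ENNReal Classical

/-- The axis path `γ = r₁e_{i₁} * ⋯ * rₙe_{iₙ}` in `ℝ^d` (with the `ℓ¹` norm),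
parametrized on `[0,1]`: on the `k`-th of `n` equal subintervals it moves linearly by
`r k` in the coordinate direction `idx k`. -/
noncomputable def axisPath (d : ℕ) {n : ℕ} (idx : Fin n → Fin d) (r : Fin n → ℝ)
    (t : ℝ) : PiLp 1 fun _ : Fin d => ℝ :=
  ∑ j : Fin n,
    (min (max ((n : ℝ) * t - (j : ℝ)) 0) 1 * r j) •
      (WithLp.toLp 1 (Pi.single (idx j) 1) : PiLp 1 fun _ : Fin d => ℝ)

/-! Coordinate `c` of an axis path moves only while the path runs along a segment of
direction `c`. A nonzero term of a dyadic sum for the word `w'` therefore picks, for its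
increasing time intervals, segments `K 0 ≤ K 1 ≤ ⋯` with `idx ∘ K = w'`; since `w'` is
square free, consecutive segments differ, so `K` is strictly increasing and `w'` has at
most `n` letters. Hence for longer square-free words every dyadic sum is `0`. -/

lemma min_max_sub_eq_of_not_overlap {x y a : ℝ} (hxy : x ≤ y) (h : ¬(a < y ∧ x < a + 1)) :
    min (max (x - a) 0) 1 = min (max (y - a) 0) 1 := by
  rcases le_or_gt y a with hya | hay
  · rw [max_eq_right (by linarith), max_eq_right (by linarith)]
  · have hx : a + 1 ≤ x := not_lt.1 fun hx => h ⟨hay, hx⟩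
    rw [min_eq_right (le_max_of_le_left (by linarith)),
      min_eq_right (le_max_of_le_left (by linarith))]

section AxisPath

variable {d n : ℕ} (idx : Fin n → Fin d) (r : Fin n → ℝ)

lemma axisPath_apply (t : ℝ) (c : Fin d) :
    axisPath d idx r t c =
      ∑ k : Fin n, if idx k = c then min (max ((n : ℝ) * t - k) 0) 1 * r k else 0 := by
  simp [axisPath, Pi.single_apply, @eq_comm _ c]

lemma exists_segment_of_axisPath_sub_ne_zero {c : Fin d} {u₁ u₂ : ℝ} (h12 : u₁ ≤ u₂)
    (h : axisPath d idx r u₂ c - axisPath d idx r u₁ c ≠ 0) :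
    ∃ k : Fin n, idx k = c ∧ (k : ℝ) < n * u₂ ∧ (n : ℝ) * u₁ < k + 1 := by
  contrapose! h
  rw [axisPath_apply, axisPath_apply, ← Finset.sum_sub_distrib]
  refine Finset.sum_eq_zero fun k _ => ?_
  split_ifs with hk
  · rw [min_max_sub_eq_of_not_overlap (by gcongr)
      (fun hov => (h k hk hov.1).not_gt hov.2), sub_self]
  · exact sub_self 0

theorem dyadicSigSum_axisPath_eq_zero {m : ℕ} (hm : n < m) (w : Fin m → Fin d)
    (hw : ∀ k : Fin m, ∀ h : (k : ℕ) + 1 < m, w k ≠ w ⟨(k : ℕ) + 1, h⟩) (M : ℕ) :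
    dyadicSigSum d (axisPath d idx r) 0 1 w M = 0 := by
  obtain ⟨m, rfl⟩ : ∃ m', m = m' + 1 := ⟨m - 1, by omega⟩
  refine Finset.sum_eq_zero fun j hj => ?_
  have hj : StrictMono j := (Finset.mem_filter.1 hj).2
  by_contra hprod
  simp only [zero_add, sub_zero, one_mul] at hprod
  choose K hKw hK_lt hlt_K using fun i =>
    exists_segment_of_axisPath_sub_ne_zero idx r (by gcongr; linarith)
      (Finset.prod_ne_zero_iff.1 hprod i (Finset.mem_univ i))
  have hK : StrictMono K := by
    refine Fin.strictMono_iff_lt_succ.2 fun i => lt_of_le_of_ne ?_ ?_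
    · have hji : (j i.castSucc : ℝ) + 1 ≤ j i.succ := by
        exact_mod_cast hj i.castSucc_lt_succ
      have : ((K i.castSucc : ℕ) : ℝ) < (K i.succ : ℕ) + 1 :=
        calc (K i.castSucc : ℝ) < n * ((j i.castSucc + 1) / 2 ^ M) := hK_lt _
          _ ≤ n * (j i.succ / 2 ^ M) := by gcongr
          _ < K i.succ + 1 := hlt_K _
      exact Fin.le_iff_val_le_val.2 (Nat.lt_add_one_iff.1 (by exact_mod_cast this))
    · intro he
      exact hw i.castSucc (by simp) (by rw [← hKw, ← hKw, he]; rfl)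
  exact absurd (Fin.le_of_injective K hK.injective) (by omega)

end AxisPath

theorem axisPath_longer_squarefree_vanish_general (d : ℕ) {n : ℕ} (idx : Fin n → Fin d)
    (r : Fin n → ℝ)
    (m : ℕ) (hm : n + 1 ≤ m) (w' : Fin m → Fin d)
    (hw' : ∀ k : Fin m, ∀ h : (k : ℕ) + 1 < m, w' k ≠ w' ⟨(k : ℕ) + 1, h⟩) :
    sigCoeff d (axisPath d idx r) 0 1 w' = 0 := by
  rw [sigCoeff, funext (dyadicSigSum_axisPath_eq_zero idx r hm w' hw')]
  exact tendsto_const_nhds.limUnder_eq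

/-- For a reduced axis path of shape `(e_{i₁},…,e_{iₙ})`, every square-free word `w'` of
length at least `n+1` has vanishing signature coefficient; thus the shape word is the
unique longest square-free word with nonzero coefficient. -/
theorem axisPath_longer_squarefree_vanish (d : ℕ) {n : ℕ} (idx : Fin n → Fin d)
    (r : Fin n → ℝ) (hr : ∀ k, r k ≠ 0)
    (hsf : ∀ k : Fin n, ∀ h : (k : ℕ) + 1 < n, idx k ≠ idx ⟨(k : ℕ) + 1, h⟩)
    (m : ℕ) (hm : n + 1 ≤ m) (w' : Fin m → Fin d)
    (hw' : ∀ k : Fin m, ∀ h : (k : ℕ) + 1 < m, w' k ≠ w' ⟨(k : ℕ) + 1, h⟩) :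
    sigCoeff d (axisPath d idx r) 0 1 w' = 0 :=
  axisPath_longer_squarefree_vanish_general d idx r m hm w' hw'
end
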